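/- Let H < -1, C_1 = 2(H + sqrt(H^2 - 1)) < C < 0, and f(t) = sqrt((C - 2H + sqrt(4 + C^2 - 4CH)·sin(2·sqrt(H^2-1)·t))/(2H^2 - 2)). Then f satisfies the differential identity (f'(t))^2 + f(t)^(-2) + (H^2 - 1) f(t)^2 + 2H = C for all t ∈ ℝ. -/

import Mathlib

/-!
Put `k = H² - 1`, `A = C - 2H` and `B = √(4 + C² - 4CH) = √(A² - 4k)`. Then `g = f²` is the
sinusoid `(A + B sin (2√k t)) / (2k)`, and `sin² + cos² = 1` together with `B² = A² - 4k` gives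
the first-order equation `g'² + 4k g² - 4A g + 4 = 0`; dividing it by `4g` turns it into
`f'² + f⁻² + k f² = A`, which is the claim. The bound `C > C₁` says `A > 2√k`, so `0 ≤ B < A`
and `g` stays positive, which is what makes `√g` differentiable.
-/

open Real

/-- The explicit profile function `f` from the hyperbolic rotational construction. -/
noncomputable def profileF (H C : ℝ) (t : ℝ) : ℝ :=
  Real.sqrt ((C - 2 * H + Real.sqrt (4 + C ^ 2 - 4 * C * H) *
      Real.sin (2 * Real.sqrt (H ^ 2 - 1) * t)) / (2 * H ^ 2 - 2))

theorem deriv_sqrt_sq_add_zpow_add_mul_sq {g : ℝ → ℝ} {g' k A t : ℝ} (hg : HasDerivAt g g' t)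
    (hpos : 0 < g t) (hode : g' ^ 2 + 4 * k * g t ^ 2 - 4 * A * g t + 4 = 0) :
    deriv (fun u => √(g u)) t ^ 2 + √(g t) ^ (-2 : ℤ) + k * √(g t) ^ 2 = A := by
  rw [(hg.sqrt hpos.ne').deriv, zpow_neg, zpow_two]
  have hsq : √(g t) ^ 2 = g t := sq_sqrt hpos.le
  have hroot : 0 < √(g t) := sqrt_pos.mpr hpos
  field_simp
  linear_combination (4 * k * √(g t) ^ 2 - 4 * A + g t * 4 * k) * hsq + hode

noncomputable def sinusoid (k A B u : ℝ) : ℝ :=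
  (A + B * sin (2 * √k * u)) / (2 * k)

theorem hasDerivAt_sinusoid (k A B t : ℝ) :
    HasDerivAt (sinusoid k A B) (B * (cos (2 * √k * t) * (2 * √k)) / (2 * k)) t := by
  have hlin : HasDerivAt (fun u : ℝ => 2 * √k * u) (2 * √k) t := by
    simpa using (hasDerivAt_id t).const_mul (2 * √k)
  exact (((hasDerivAt_sin _).comp t hlin).const_mul B).const_add A |>.div_const (2 * k)

theorem sinusoid_ode {k A B : ℝ} (hk : 0 < k) (hB : B ^ 2 = A ^ 2 - 4 * k) (t : ℝ) :
    (B * (cos (2 * √k * t) * (2 * √k)) / (2 * k)) ^ 2 + 4 * k * sinusoid k A B t ^ 2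
      - 4 * A * sinusoid k A B t + 4 = 0 := by
  have hroot : √k ^ 2 = k := sq_sqrt hk.le
  unfold sinusoid
  field_simp
  linear_combination (4 * B ^ 2 * cos (2 * √k * t) ^ 2) * hroot + (4 * k) * hB
    + (4 * k * B ^ 2) * sin_sq_add_cos_sq (2 * √k * t)

theorem sinusoid_pos {k A B : ℝ} (hk : 0 < k) (hB : 0 ≤ B) (hBA : B < A) (t : ℝ) :
    0 < sinusoid k A B t := by
  have hsin : -B ≤ B * sin (2 * √k * t) := by nlinarith [neg_one_le_sin (2 * √k * t)]
  exact div_pos (by linarith) (by positivity)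

theorem sqrt_sinusoid_ode {k A : ℝ} (hk : 0 < k) (hA : 2 * √k < A) (t : ℝ) :
    deriv (fun u => √(sinusoid k A √(A ^ 2 - 4 * k) u)) t ^ 2
      + √(sinusoid k A √(A ^ 2 - 4 * k) t) ^ (-2 : ℤ)
      + k * √(sinusoid k A √(A ^ 2 - 4 * k) t) ^ 2 = A := by
  have hdisc : 0 < A ^ 2 - 4 * k := by nlinarith [sq_sqrt hk.le, sqrt_nonneg k]
  have hBA : √(A ^ 2 - 4 * k) < A :=
    (sqrt_lt' (by linarith [sqrt_nonneg k])).mpr (by linarith)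
  exact deriv_sqrt_sq_add_zpow_add_mul_sq (hasDerivAt_sinusoid _ _ _ t)
    (sinusoid_pos hk (sqrt_nonneg _) hBA t) (sinusoid_ode hk (sq_sqrt hdisc.le) t)

theorem stmt_11 (H : ℝ) (hH : H < -1) (C : ℝ)
    (hC1 : 2 * (H + Real.sqrt (H ^ 2 - 1)) < C) :
    ∀ t : ℝ,
      (deriv (profileF H C) t) ^ 2 + (profileF H C t) ^ (-2 : ℤ)
        + (H ^ 2 - 1) * (profileF H C t) ^ 2 + 2 * H = C := by
  intro t
  have hprofile : profileF H C =
      fun u => √(sinusoid (H ^ 2 - 1) (C - 2 * H) √((C - 2 * H) ^ 2 - 4 * (H ^ 2 - 1)) u) := by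
    funext u
    simp only [profileF, sinusoid]
    ring_nf
  have := sqrt_sinusoid_ode (k := H ^ 2 - 1) (A := C - 2 * H) (by nlinarith) (by linarith) t
  rw [hprofile]
  linarith
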